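/- Let 0 < η < π/3, a = e^{-iη}/(2cos η), c = 1/(1-|a|⁴), z_k = ca^{k+1}, w_k = 1-c|a|²a^k, b₀ = a+c|a|⁴. Then for every integer n ≥ 0, the counterclockwise angle ∠b₀z₀z₁ = ∠z_n z_{n+1} z_{n+2} = ∠w_n w_{n+1} w_{n+2} = π - η; equivalently, (z₁-z₀)/(b₀-z₀) = -a/|a|⁴ and (z_{n+2}-z_{n+1})/(z_n-z_{n+1}) = (w_{n+2}-w_{n+1})/(w_n-w_{n+1}) = -a. -/

import Mathlib

/-!
With `r = 1/(2 cos η)` we have `a = r e^{-iη}`, so `Re a = 1/2` (hence `a ≠ 0, 1`) and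
`-a = r e^{i(π - η)}` has argument `π - η`. Both `z` and `w` are affine images `α + β a^k` of a
geometric sequence, so the ratio of consecutive differences is `-a`. For the first angle,
`c (1 - |a|⁴) = 1` gives `b₀ - z₀ = c |a|⁴ (1 - a)` against `z₁ - z₀ = -c a (1 - a)`; `c` is finite
because `cos η > 1/2` forces `|a| < 1`.
-/

open Real Set

theorem sub_div_sub_eq_neg_of_eq_add_mul_pow {K : Type*} [Field K] {f : ℕ → K} {α β a : K}
    (hf : ∀ k, f k = α + β * a ^ k) (hβ : β ≠ 0) (ha₀ : a ≠ 0) (ha₁ : a ≠ 1) (n : ℕ) :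
    (f (n + 2) - f (n + 1)) / (f n - f (n + 1)) = -a := by
  have hden : f n - f (n + 1) = β * a ^ n * (1 - a) := by
    rw [hf, hf]
    ring
  have hden₀ : f n - f (n + 1) ≠ 0 := by
    rw [hden]
    exact mul_ne_zero (mul_ne_zero hβ (pow_ne_zero n ha₀)) (sub_ne_zero.mpr ha₁.symm)
  rw [div_eq_iff hden₀, hf, hf, hf]
  ring

theorem sub_div_add_sub_eq_neg_div_pow_four {K : Type*} [Field K] {a c r : K}
    (hc : c * (1 - r ^ 4) = 1) (hr : r ≠ 0) (ha₁ : a ≠ 1) :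
    (c * a ^ 2 - c * a) / (a + c * r ^ 4 - c * a) = -a / r ^ 4 := by
  have hc₀ : c ≠ 0 := left_ne_zero_of_mul_eq_one hc
  have hden : a + c * r ^ 4 - c * a = c * r ^ 4 * (1 - a) := by
    linear_combination (-a) * hc
  rw [hden, div_eq_div_iff (mul_ne_zero (mul_ne_zero hc₀ (pow_ne_zero 4 hr))
    (sub_ne_zero.mpr ha₁.symm)) (pow_ne_zero 4 hr)]
  ring

theorem exp_neg_mul_I_div_two_cos_eq (η : ℝ) :
    Complex.exp (-(η : ℂ) * Complex.I) / (2 * Real.cos η)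
      = ((2 * Real.cos η)⁻¹ : ℝ) * (Complex.cos η - Complex.sin η * Complex.I) := by
  rw [Complex.exp_mul_I, Complex.cos_neg, Complex.sin_neg, Complex.ofReal_cos]
  push_cast
  ring

theorem re_exp_neg_mul_I_div_two_cos {η : ℝ} (h : Real.cos η ≠ 0) :
    (Complex.exp (-(η : ℂ) * Complex.I) / (2 * Real.cos η)).re = 1 / 2 := by
  rw [exp_neg_mul_I_div_two_cos_eq, Complex.re_ofReal_mul]
  simp only [Complex.sub_re, Complex.cos_ofReal_re, Complex.mul_I_re, Complex.sin_ofReal_im,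
    neg_zero, sub_zero]
  field_simp

theorem norm_exp_neg_mul_I_div_two_cos {η : ℝ} (h : 0 < Real.cos η) :
    ‖Complex.exp (-(η : ℂ) * Complex.I) / (2 * Real.cos η)‖ = (2 * Real.cos η)⁻¹ := by
  rw [norm_div, ← Complex.ofReal_neg, Complex.norm_exp_ofReal_mul_I]
  norm_cast
  rw [Real.norm_of_nonneg (by positivity), one_div]

theorem norm_exp_neg_mul_I_div_two_cos_lt_one {η : ℝ} (h₀ : 0 ≤ η) (h₁ : η < π / 3) :
    ‖Complex.exp (-(η : ℂ) * Complex.I) / (2 * Real.cos η)‖ < 1 := by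
  have hcos : 1 / 2 < Real.cos η := by
    rw [← Real.cos_pi_div_three]
    exact Real.cos_lt_cos_of_nonneg_of_le_pi h₀ (by linarith [Real.pi_pos]) h₁
  rw [norm_exp_neg_mul_I_div_two_cos (by linarith)]
  exact inv_lt_one_of_one_lt₀ (by linarith)

theorem arg_neg_exp_neg_mul_I_div_two_cos {η : ℝ} (h₀ : 0 ≤ η) (h₁ : η < π / 2) :
    Complex.arg (-(Complex.exp (-(η : ℂ) * Complex.I) / (2 * Real.cos η))) = π - η := by
  have hcos : 0 < Real.cos η := Real.cos_pos_of_mem_Ioo ⟨by linarith, h₁⟩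
  have hrot : -(Complex.cos η - Complex.sin η * Complex.I)
      = Complex.cos ↑(π - η) + Complex.sin ↑(π - η) * Complex.I := by
    push_cast
    rw [Complex.cos_pi_sub, Complex.sin_pi_sub]
    ring
  rw [exp_neg_mul_I_div_two_cos_eq, ← mul_neg, hrot,
    Complex.arg_mul_cos_add_sin_mul_I (by positivity) ⟨by linarith [Real.pi_pos], by linarith⟩]

theorem stmt18 (η : ℝ) (hη0 : 0 < η) (hη1 : η < π / 3)
    (a : ℂ) (ha : a = Complex.exp (-(η : ℂ) * Complex.I) / (2 * Real.cos η))
    (c : ℝ) (hc : c = 1 / (1 - ‖a‖ ^ 4))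
    (z w : ℕ → ℂ) (hz : ∀ k, z k = (c : ℂ) * a ^ (k + 1))
    (hw : ∀ k, w k = 1 - (c : ℂ) * (‖a‖ : ℂ) ^ 2 * a ^ k)
    (b₀ : ℂ) (hb₀ : b₀ = a + (c : ℂ) * (‖a‖ : ℂ) ^ 4) :
    (z 1 - z 0) / (b₀ - z 0) = -a / (‖a‖ : ℂ) ^ 4 ∧
    (∀ n : ℕ, (z (n + 2) - z (n + 1)) / (z n - z (n + 1)) = -a ∧
      (w (n + 2) - w (n + 1)) / (w n - w (n + 1)) = -a) ∧
    Complex.arg ((z 1 - z 0) / (b₀ - z 0)) = π - η ∧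
    (∀ n : ℕ, Complex.arg ((z (n + 2) - z (n + 1)) / (z n - z (n + 1))) = π - η ∧
      Complex.arg ((w (n + 2) - w (n + 1)) / (w n - w (n + 1))) = π - η) := by
  have hcos : 0 < Real.cos η := Real.cos_pos_of_mem_Ioo ⟨by linarith, by linarith⟩
  have hre : a.re = 1 / 2 := ha ▸ re_exp_neg_mul_I_div_two_cos hcos.ne'
  have ha₀ : a ≠ 0 := fun h => by norm_num [h] at hre
  have ha₁ : a ≠ 1 := fun h => by norm_num [h] at hre
  have hnorm₀ : 0 < ‖a‖ := norm_pos_iff.mpr ha₀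
  have hnorm₁ : ‖a‖ < 1 := ha ▸ norm_exp_neg_mul_I_div_two_cos_lt_one hη0.le hη1
  have hcR : c * (1 - ‖a‖ ^ 4) = 1 := by
    rw [hc, one_div, inv_mul_cancel₀ (sub_pos.mpr (pow_lt_one₀ hnorm₀.le hnorm₁ four_ne_zero)).ne']
  have harg : Complex.arg (-a) = π - η :=
    ha ▸ arg_neg_exp_neg_mul_I_div_two_cos hη0.le (by linarith)
  have hfirst : (z 1 - z 0) / (b₀ - z 0) = -a / (‖a‖ : ℂ) ^ 4 := by
    have hcC : (c : ℂ) * (1 - (‖a‖ : ℂ) ^ 4) = 1 := by exact_mod_cast hcR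
    rw [hz, hz, hb₀, zero_add, pow_one, one_add_one_eq_two]
    exact sub_div_add_sub_eq_neg_div_pow_four hcC (Complex.ofReal_ne_zero.mpr hnorm₀.ne') ha₁
  have hc₀ : (c : ℂ) ≠ 0 := Complex.ofReal_ne_zero.mpr (left_ne_zero_of_mul_eq_one hcR)
  have hz_affine (k : ℕ) : z k = 0 + c * a * a ^ k := by rw [hz]; ring
  have hw_affine (k : ℕ) : w k = 1 + -(c * (‖a‖ : ℂ) ^ 2) * a ^ k := by rw [hw]; ring
  have hzw (n : ℕ) : (z (n + 2) - z (n + 1)) / (z n - z (n + 1)) = -a ∧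
      (w (n + 2) - w (n + 1)) / (w n - w (n + 1)) = -a :=
    ⟨sub_div_sub_eq_neg_of_eq_add_mul_pow hz_affine (mul_ne_zero hc₀ ha₀) ha₀ ha₁ n,
      sub_div_sub_eq_neg_of_eq_add_mul_pow hw_affine
        (neg_ne_zero.mpr (mul_ne_zero hc₀ (by exact_mod_cast (pow_pos hnorm₀ 2).ne'))) ha₀ ha₁ n⟩
  refine ⟨hfirst, hzw, ?_, fun n => ⟨?_, ?_⟩⟩
  · rw [hfirst, div_eq_mul_inv, ← Complex.ofReal_pow, ← Complex.ofReal_inv,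
      Complex.arg_mul_real (by positivity), harg]
  · rw [(hzw n).1, harg]
  · rw [(hzw n).2, harg]
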